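/- arXiv:1701.07957 — 2 statements merged into one kernel-verified Lean document; each statement's English description precedes it below -/
import Mathlib

section
/- Let u be a smooth function on an open neighbourhood of a point x_c in R^n satisfying the Helmholtz equation (Δ + k²)u = 0, and suppose all partial derivatives ∂^γ u(x_c) vanish for |γ| < N. Then the N-th degree homogeneous Taylor polynomial P_N(x) = Σ_{|γ|=N} (∂^γ u(x_c)/γ!) x^γ is a harmonic polynomial, i.e. ΔP_N ≡ 0. -/
open MeasureTheory Metric Real
open scoped RealInnerProductSpace BigOperators

noncomputable section

/-- Euclidean space ℝⁿ. -/
abbrev Euc (n : ℕ) := EuclideanSpace ℝ (Fin n)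

/-- Partial derivative in the `i`-th coordinate direction. -/
def coordDeriv (n : ℕ) (i : Fin n) (f : Euc n → ℂ) : Euc n → ℂ :=
  fun x => fderiv ℝ f x (EuclideanSpace.single i (1 : ℝ))

/-- Multi-index partial derivative `∂^γ`. -/
def multiDeriv (n : ℕ) (γ : Fin n → ℕ) (f : Euc n → ℂ) : Euc n → ℂ :=
  (List.finRange n).foldr (fun i g => (coordDeriv n i)^[γ i] g) f

/-- The Laplacian `Δf = ∑ ∂²f/∂xᵢ²`. -/
def lap (n : ℕ) (f : Euc n → ℂ) : Euc n → ℂ :=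
  fun x => ∑ i : Fin n, coordDeriv n i (coordDeriv n i f) x

/-- The surface measure on the unit sphere `S^{n-1} ⊂ ℝⁿ`. -/
def sphMeasure (n : ℕ) : Measure (sphere (0 : Euc n) 1) :=
  (volume : Measure (Euc n)).toSphere

/-- The Herglotz wave with wavenumber `k` and kernel `g`. -/
def herglotz (n : ℕ) (k : ℝ) (g : sphere (0 : Euc n) 1 → ℂ) : Euc n → ℂ :=
  fun x => ∫ θ, Complex.exp (Complex.I * k * (⟪(θ : Euc n), x⟫ : ℂ)) * g θ ∂(sphMeasure n)

/-- The `L²(S^{n-1})` norm of a kernel. -/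
def l2S (n : ℕ) (g : sphere (0 : Euc n) 1 → ℂ) : ℝ :=
  Real.sqrt (∫ θ, ‖g θ‖ ^ 2 ∂(sphMeasure n))

/-- The `L¹(S^{n-1})` norm of (the restriction to the sphere of) a function. -/
def normS (n : ℕ) (P : Euc n → ℂ) : ℝ :=
  ∫ θ, ‖P (θ : Euc n)‖ ∂(sphMeasure n)

/-- The `L²(Ω)` norm of a function on a subset `Ω ⊂ ℝⁿ`. -/
def l2O (n : ℕ) (Ω : Set (Euc n)) (f : Euc n → ℂ) : ℝ :=
  Real.sqrt (∫ x in Ω, ‖f x‖ ^ 2)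

/-- The finite set of multi-indices of total degree `N`. -/
def degSet (n N : ℕ) : Finset (Fin n → ℕ) :=
  (Fintype.piFinset fun _ => Finset.range (N + 1)).filter fun γ => ∑ i, γ i = N

/-- The degree-`N` homogeneous Taylor polynomial of `u` at `x_c`, evaluated at `x`. -/
def taylorHom (n N : ℕ) (u : Euc n → ℂ) (xc : Euc n) : Euc n → ℂ :=
  fun x => ∑ γ ∈ degSet n N,
    (multiDeriv n γ u xc / (∏ i, Nat.factorial (γ i) : ℕ)) * ∏ i, ((x i : ℂ)) ^ γ i

/-- A function is homogeneous of degree `N`. -/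
def IsHomog (n N : ℕ) (P : Euc n → ℂ) : Prop :=
  ∀ t : ℝ, 0 < t → ∀ x : Euc n, P (t • x) = (t : ℂ) ^ N * P x

/-- An open cone with vertex at the origin. -/
def IsOpenCone (n : ℕ) (C : Set (Euc n)) : Prop :=
  IsOpen C ∧ ∀ t : ℝ, 0 < t → ∀ x ∈ C, t • x ∈ C

end

noncomputable section Aux
open Function

variable {n : ℕ}

/-! ### Polynomial part -/

def mono (n : ℕ) (γ : Fin n → ℕ) : Euc n → ℂ := fun x => ∏ j, ((x j : ℂ)) ^ γ j

def coordCLM (n : ℕ) (j : Fin n) : Euc n →L[ℝ] ℂ :=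
  Complex.ofRealCLM.comp (EuclideanSpace.proj j)

lemma coordCLM_apply (j : Fin n) (x : Euc n) : coordCLM n j x = ((x j : ℝ) : ℂ) := rfl

lemma coordCLM_single (i j : Fin n) :
    coordCLM n j (EuclideanSpace.single i (1:ℝ)) = if j = i then 1 else 0 := by
  rw [coordCLM_apply, EuclideanSpace.single_apply]
  split <;> simp

lemma mono_update (γ : Fin n → ℕ) (j : Fin n) (m : ℕ) (x : Euc n) :
    mono n (Function.update γ j m) x
      = (x j : ℂ) ^ m * ∏ l ∈ Finset.univ.erase j, (x l : ℂ) ^ γ l := by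
  unfold mono
  have h : (fun l => ((x l : ℂ)) ^ (Function.update γ j m l))
      = Function.update (fun l => ((x l : ℂ)) ^ γ l) j ((x j : ℂ) ^ m) := by
    funext l
    rcases eq_or_ne l j with rfl | hl
    · simp
    · simp [Function.update_of_ne hl]
  rw [h, Finset.prod_update_of_mem (Finset.mem_univ j), Finset.erase_eq]

lemma hasFDerivAt_mono (γ : Fin n → ℕ) (x : Euc n) :
    HasFDerivAt (mono n γ)
      (∑ j, ((γ j : ℂ) * mono n (Function.update γ j (γ j - 1)) x) • coordCLM n j) x := by
  have h : ∀ j ∈ Finset.univ, HasFDerivAt (fun y : Euc n => (coordCLM n j y) ^ γ j)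
      (((γ j : ℂ) * (coordCLM n j x) ^ (γ j - 1)) • coordCLM n j) x := fun j _ =>
    (hasDerivAt_pow (γ j) (coordCLM n j x)).comp_hasFDerivAt x (coordCLM n j).hasFDerivAt
  refine (HasFDerivAt.finset_prod h).congr_fderiv ?_
  apply Finset.sum_congr rfl
  intro j _
  rw [smul_smul, mono_update]
  congr 1
  simp only [coordCLM_apply]
  ring

lemma differentiable_mono (γ : Fin n → ℕ) : Differentiable ℝ (mono n γ) :=
  fun x => (hasFDerivAt_mono γ x).differentiableAt

lemma coordDeriv_mono (γ : Fin n → ℕ) (i : Fin n) :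
    coordDeriv n i (mono n γ)
      = fun x => (γ i : ℂ) * mono n (Function.update γ i (γ i - 1)) x := by
  funext x
  rw [coordDeriv, (hasFDerivAt_mono γ x).fderiv, ContinuousLinearMap.sum_apply,
    Finset.sum_eq_single i]
  · simp [coordCLM_single]
  · intro j _ hj
    simp [coordCLM_single, hj]
  · simp

lemma coordDeriv_sum_mono {α : Type*} (s : Finset α) (E : α → Fin n → ℕ) (C : α → ℂ) (i : Fin n) :
    coordDeriv n i (fun x => ∑ a ∈ s, C a * mono n (E a) x)
      = fun x => ∑ a ∈ s, (C a * (E a i : ℂ)) * mono n (Function.update (E a) i (E a i - 1)) x := by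
  funext x
  rw [coordDeriv]
  have hd : ∀ a ∈ s, DifferentiableAt ℝ (fun x => C a * mono n (E a) x) x :=
    fun a _ => (differentiable_mono (E a) x).const_mul _
  rw [fderiv_fun_sum hd, ContinuousLinearMap.sum_apply]
  apply Finset.sum_congr rfl
  intro a _
  rw [fderiv_const_mul (differentiable_mono (E a) x)]
  have h2 := congrFun (coordDeriv_mono (E a) i) x
  rw [coordDeriv] at h2
  simp only [ContinuousLinearMap.smul_apply, h2, smul_eq_mul]
  ring

/-- Laplacian of a linear combination of monomials. -/
lemma lap_sum_mono {α : Type*} (s : Finset α) (E : α → Fin n → ℕ) (C : α → ℂ) (x : Euc n) :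
    lap n (fun x => ∑ a ∈ s, C a * mono n (E a) x) x
      = ∑ i, ∑ a ∈ s, (C a * (E a i : ℂ) * ((E a i - 1 : ℕ) : ℂ))
          * mono n (Function.update (E a) i (E a i - 2)) x := by
  rw [lap]
  apply Finset.sum_congr rfl
  intro i _
  rw [coordDeriv_sum_mono s E C i]
  have h2 := coordDeriv_sum_mono s (fun a => Function.update (E a) i (E a i - 1))
      (fun a => C a * (E a i : ℂ)) i
  rw [h2]
  apply Finset.sum_congr rfl
  intro a _
  simp only [Function.update_self, Function.update_idem]
  have h3 : E a i - 1 - 1 = E a i - 2 := by omega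
  rw [h3]

/-! ### Analytic part : derivatives along a list of directions -/

def dlist (l : List (Fin n)) (f : Euc n → ℂ) : Euc n → ℂ :=
  l.foldr (fun i g => coordDeriv n i g) f

@[simp] lemma dlist_nil (f : Euc n → ℂ) : dlist [] f = f := rfl

@[simp] lemma dlist_cons (i : Fin n) (l : List (Fin n)) (f : Euc n → ℂ) :
    dlist (i :: l) f = coordDeriv n i (dlist l f) := rfl

lemma dlist_append (l₁ l₂ : List (Fin n)) (f : Euc n → ℂ) :
    dlist (l₁ ++ l₂) f = dlist l₁ (dlist l₂ f) := by
  unfold dlist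
  rw [List.foldr_append]

lemma iterate_coordDeriv (i : Fin n) (m : ℕ) (f : Euc n → ℂ) :
    (coordDeriv n i)^[m] f = dlist (List.replicate m i) f := by
  induction m with
  | zero => rfl
  | succ m ih => rw [Function.iterate_succ_apply', ih, List.replicate_succ, dlist_cons]

def bigList (γ : Fin n → ℕ) : List (Fin n) :=
  (List.finRange n).flatMap fun i => List.replicate (γ i) i

lemma multiDeriv_eq_dlist (γ : Fin n → ℕ) (f : Euc n → ℂ) :
    multiDeriv n γ f = dlist (bigList γ) f := by
  unfold multiDeriv bigList
  generalize (List.finRange n) = L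
  induction L with
  | nil => rfl
  | cons a L ih =>
      rw [List.foldr_cons, ih, List.flatMap_cons, dlist_append, iterate_coordDeriv]

lemma count_bigList (γ : Fin n → ℕ) (j : Fin n) : (bigList γ).count j = γ j := by
  unfold bigList
  rw [List.count_flatMap]
  have h : ∀ i : Fin n, (List.count j ∘ fun i => List.replicate (γ i) i) i
      = if i = j then γ i else 0 := by
    intro i
    simp only [Function.comp_apply, List.count_replicate]
    split <;> split <;> simp_all
  calc (List.map (List.count j ∘ fun i => List.replicate (γ i) i) (List.finRange n)).sum
      = (List.map (fun i => if i = j then γ i else 0) (List.finRange n)).sum := by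
        congr 1; exact List.map_congr_left fun i _ => h i
    _ = ∑ i : Fin n, (if i = j then γ i else 0) := by
        rw [Finset.sum]
        rfl
    _ = γ j := by simp

lemma bigList_perm (β : Fin n → ℕ) (i : Fin n) :
    (bigList (Function.update β i (β i + 2))).Perm (bigList β ++ [i, i]) := by
  rw [List.perm_iff_count]
  intro j
  rw [List.count_append, count_bigList, count_bigList]
  rcases eq_or_ne j i with rfl | hj
  · simp
  · simp [Function.update_of_ne hj, List.count_cons, hj, hj.symm]

/-! smoothness bookkeeping -/

def SmOn (U : Set (Euc n)) (f : Euc n → ℂ) : Prop := ∀ x ∈ U, ContDiffAt ℝ (⊤ : ℕ∞) f x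

lemma SmOn.coordDeriv {U : Set (Euc n)} {f : Euc n → ℂ} (hf : SmOn U f) (i : Fin n) :
    SmOn U (coordDeriv n i f) := by
  intro x hx
  have h2 : ContDiffAt ℝ (⊤ : ℕ∞) (fderiv ℝ f) x := (hf x hx).fderiv_right (by simp)
  exact h2.clm_apply contDiffAt_const

lemma SmOn.dlist {U : Set (Euc n)} {f : Euc n → ℂ} (hf : SmOn U f) (l : List (Fin n)) :
    SmOn U (dlist l f) := by
  induction l with
  | nil => exact hf
  | cons a l ih => exact ih.coordDeriv a

lemma coordDeriv_congr_on {U : Set (Euc n)} (hU : IsOpen U) {f g : Euc n → ℂ}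
    (h : ∀ y ∈ U, f y = g y) {x : Euc n} (hx : x ∈ U) (i : Fin n) :
    coordDeriv n i f x = coordDeriv n i g x := by
  have he : f =ᶠ[nhds x] g := Filter.eventuallyEq_of_mem (hU.mem_nhds hx) h
  rw [coordDeriv, coordDeriv, he.fderiv_eq]

lemma dlist_congr_on {U : Set (Euc n)} (hU : IsOpen U) {f g : Euc n → ℂ}
    (h : ∀ y ∈ U, f y = g y) (l : List (Fin n)) :
    ∀ x ∈ U, dlist l f x = dlist l g x := by
  induction l with
  | nil => exact h
  | cons a l ih =>
      intro x hx
      exact coordDeriv_congr_on hU ih hx a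

lemma coordDeriv_swap_at {f : Euc n → ℂ} {x : Euc n} (hf : ContDiffAt ℝ (⊤ : ℕ∞) f x) (i j : Fin n) :
    coordDeriv n i (coordDeriv n j f) x = coordDeriv n j (coordDeriv n i f) x := by
  have hdf : ContDiffAt ℝ (⊤ : ℕ∞) (fderiv ℝ f) x := hf.fderiv_right (by simp)
  have key : ∀ v w : Euc n,
      fderiv ℝ (fun y => fderiv ℝ f y v) x w = fderiv ℝ (fderiv ℝ f) x w v := by
    intro v w
    have h1 : fderiv ℝ (fun y => fderiv ℝ f y v) x
        = ((fderiv ℝ f x).comp (fderiv ℝ (fun _ : Euc n => v) x))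
          + (fderiv ℝ (fderiv ℝ f) x).flip v := by
      have := fderiv_clm_apply (c := fderiv ℝ f) (u := fun _ => v)
        (hdf.differentiableAt (by simp)) (differentiableAt_const v)
      exact this
    rw [h1]
    simp
  have hsymm : IsSymmSndFDerivAt ℝ f x := hf.isSymmSndFDerivAt (by
    rw [minSmoothness_of_isRCLikeNormedField]; exact WithTop.coe_le_coe.mpr le_top)
  show fderiv ℝ (fun y => fderiv ℝ f y (EuclideanSpace.single j 1)) x (EuclideanSpace.single i 1)
      = fderiv ℝ (fun y => fderiv ℝ f y (EuclideanSpace.single i 1)) x (EuclideanSpace.single j 1)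
  rw [key, key]
  exact hsymm _ _

lemma dlist_perm_on {U : Set (Euc n)} (hU : IsOpen U) {f : Euc n → ℂ} (hf : SmOn U f)
    {l₁ l₂ : List (Fin n)} (hp : l₁.Perm l₂) :
    ∀ x ∈ U, dlist l₁ f x = dlist l₂ f x := by
  induction hp with
  | nil => intro x _; rfl
  | cons a h ih =>
      intro x hx
      exact coordDeriv_congr_on hU ih hx a
  | swap a b l =>
      intro x hx
      simp only [dlist_cons]
      exact coordDeriv_swap_at ((hf.dlist l) x hx) b a
  | trans h₁ h₂ ih₁ ih₂ =>
      intro x hx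
      rw [ih₁ x hx, ih₂ x hx]

lemma coordDeriv_sum_at {α : Type*} {s : Finset α} {F : α → Euc n → ℂ} {x : Euc n}
    (hF : ∀ a ∈ s, DifferentiableAt ℝ (F a) x) (i : Fin n) :
    coordDeriv n i (fun y => ∑ a ∈ s, F a y) x = ∑ a ∈ s, coordDeriv n i (F a) x := by
  rw [coordDeriv, fderiv_fun_sum hF, ContinuousLinearMap.sum_apply]
  rfl

lemma dlist_sum_on {α : Type*} {U : Set (Euc n)} (hU : IsOpen U) {s : Finset α}
    {F : α → Euc n → ℂ} (hF : ∀ a ∈ s, SmOn U (F a)) (l : List (Fin n)) :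
    ∀ x ∈ U, dlist l (fun y => ∑ a ∈ s, F a y) x = ∑ a ∈ s, dlist l (F a) x := by
  induction l with
  | nil => intro x _; rfl
  | cons a l ih =>
      intro x hx
      rw [dlist_cons, coordDeriv_congr_on hU ih hx a]
      exact coordDeriv_sum_at
        (fun b hb => (((hF b hb).dlist l) x hx).differentiableAt (by simp)) a

lemma dlist_const_mul_on {U : Set (Euc n)} (hU : IsOpen U) {f : Euc n → ℂ} (hf : SmOn U f)
    (c : ℂ) (l : List (Fin n)) :
    ∀ x ∈ U, dlist l (fun y => c * f y) x = c * dlist l f x := by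
  induction l with
  | nil => intro x _; rfl
  | cons a l ih =>
      intro x hx
      rw [dlist_cons, coordDeriv_congr_on hU ih hx a, coordDeriv,
        fderiv_const_mul (((hf.dlist l) x hx).differentiableAt (by simp))]
      rfl


lemma mem_degSet {N : ℕ} {γ : Fin n → ℕ} : γ ∈ degSet n N ↔ ∑ i, γ i = N := by
  unfold degSet
  rw [Finset.mem_filter]
  constructor
  · exact fun h => h.2
  · intro h
    refine ⟨?_, h⟩
    rw [Fintype.mem_piFinset]
    intro i
    rw [Finset.mem_range, Nat.lt_succ_iff]
    calc γ i ≤ ∑ j, γ j :=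
          Finset.single_le_sum (fun j _ => Nat.zero_le _) (Finset.mem_univ i)
      _ = N := h

lemma prod_factorial_update (γ : Fin n → ℕ) (i : Fin n) (h : 2 ≤ γ i) :
    ∏ j, Nat.factorial (γ j)
      = γ i * (γ i - 1) * ∏ j, Nat.factorial (Function.update γ i (γ i - 2) j) := by
  have h1 : ∏ j, Nat.factorial (γ j)
      = Nat.factorial (γ i) * ∏ j ∈ Finset.univ.erase i, Nat.factorial (γ j) :=
    (Finset.mul_prod_erase Finset.univ _ (Finset.mem_univ i)).symm
  have h2 : ∏ j, Nat.factorial (Function.update γ i (γ i - 2) j)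
      = Nat.factorial (γ i - 2) * ∏ j ∈ Finset.univ.erase i, Nat.factorial (γ j) := by
    have hfun : (fun j => Nat.factorial (Function.update γ i (γ i - 2) j))
        = Function.update (fun j => Nat.factorial (γ j)) i (Nat.factorial (γ i - 2)) := by
      funext j
      rcases eq_or_ne j i with rfl | hj
      · simp
      · simp [Function.update_of_ne hj]
    rw [hfun, Finset.prod_update_of_mem (Finset.mem_univ i), Finset.erase_eq]
  rw [h1, h2]
  obtain ⟨m, hm⟩ : ∃ m, γ i = m + 2 := ⟨γ i - 2, by omega⟩
  rw [hm]
  simp only [Nat.add_sub_cancel]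
  rw [show m + 2 - 1 = m + 1 by omega]
  rw [Nat.factorial_succ, Nat.factorial_succ]
  ring

lemma reindex_sum (M : ℕ) (D : (Fin n → ℕ) → ℂ) (i : Fin n) (x : Euc n) :
    ∑ γ ∈ degSet n (M + 2),
        (D γ / ((∏ j, Nat.factorial (γ j) : ℕ) : ℂ) * (γ i : ℂ) * ((γ i - 1 : ℕ) : ℂ))
          * mono n (Function.update γ i (γ i - 2)) x
      = ∑ β ∈ degSet n M,
        (D (Function.update β i (β i + 2)) / ((∏ j, Nat.factorial (β j) : ℕ) : ℂ))
          * mono n β x := by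
  rw [← Finset.sum_filter_of_ne (p := fun γ => 2 ≤ γ i) (by
    intro γ _ hne
    by_contra hlt
    apply hne
    have : γ i = 0 ∨ γ i = 1 := by omega
    rcases this with h | h <;> simp [h])]
  refine Finset.sum_nbij' (fun γ => Function.update γ i (γ i - 2))
    (fun β => Function.update β i (β i + 2)) ?_ ?_ ?_ ?_ ?_
  · intro γ hγ
    rw [Finset.mem_filter, mem_degSet] at hγ
    rw [mem_degSet]
    rw [Finset.sum_update_of_mem (Finset.mem_univ i), ← Finset.erase_eq]
    have := Finset.add_sum_erase Finset.univ γ (Finset.mem_univ i)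
    omega
  · intro β hβ
    rw [mem_degSet] at hβ
    rw [Finset.mem_filter, mem_degSet]
    rw [Finset.sum_update_of_mem (Finset.mem_univ i), ← Finset.erase_eq]
    have := Finset.add_sum_erase Finset.univ β (Finset.mem_univ i)
    constructor
    · omega
    · simp
  · intro γ hγ
    rw [Finset.mem_filter] at hγ
    show Function.update (Function.update γ i (γ i - 2)) i
        (Function.update γ i (γ i - 2) i + 2) = γ
    rw [Function.update_self, Function.update_idem]
    rw [show γ i - 2 + 2 = γ i by omega]
    exact Function.update_eq_self i γ
  · intro β _
    show Function.update (Function.update β i (β i + 2)) i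
        (Function.update β i (β i + 2) i - 2) = β
    rw [Function.update_self, Function.update_idem]
    rw [show β i + 2 - 2 = β i by omega]
    exact Function.update_eq_self i β
  · intro γ hγ
    rw [Finset.mem_filter, mem_degSet] at hγ
    obtain ⟨hsum, h2i⟩ := hγ
    congr 1
    have harg : Function.update (Function.update γ i (γ i - 2)) i
        (Function.update γ i (γ i - 2) i + 2) = γ := by
      rw [Function.update_self, Function.update_idem, show γ i - 2 + 2 = γ i by omega]
      exact Function.update_eq_self i γ
    rw [harg]
    have hfact := prod_factorial_update γ i h2i
    have hF : ((∏ j, Nat.factorial (Function.update γ i (γ i - 2) j) : ℕ) : ℂ) ≠ 0 :=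
      Nat.cast_ne_zero.mpr (Finset.prod_ne_zero_iff.mpr
        fun j _ => Nat.factorial_ne_zero _)
    have ha : ((γ i : ℕ) : ℂ) ≠ 0 := Nat.cast_ne_zero.mpr (by omega)
    have hb : ((γ i - 1 : ℕ) : ℂ) ≠ 0 := Nat.cast_ne_zero.mpr (by omega)
    rw [hfact, Nat.cast_mul, Nat.cast_mul]
    rw [div_mul_eq_mul_div, div_mul_eq_mul_div,
      div_eq_div_iff (mul_ne_zero (mul_ne_zero ha hb) hF) hF]
    ring


lemma key_vanish {N : ℕ} {k : ℝ} {U : Set (Euc n)} (hU : IsOpen U) {u : Euc n → ℂ}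
    {xc : Euc n} (hxc : xc ∈ U) (hsmooth : ContDiffOn ℝ (⊤ : ℕ∞) u U)
    (hhelm : ∀ x ∈ U, lap n u x + (k : ℂ) ^ 2 * u x = 0)
    (hvanish : ∀ γ : Fin n → ℕ, (∑ i, γ i) < N → multiDeriv n γ u xc = 0)
    (β : Fin n → ℕ) (hβ : (∑ i, β i) < N) :
    ∑ i, multiDeriv n (Function.update β i (β i + 2)) u xc = 0 := by
  have hsm : SmOn U u := fun x hx => hsmooth.contDiffAt (hU.mem_nhds hx)
  have h1 : ∀ i : Fin n, multiDeriv n (Function.update β i (β i + 2)) u xc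
      = dlist (bigList β) (coordDeriv n i (coordDeriv n i u)) xc := by
    intro i
    rw [multiDeriv_eq_dlist, dlist_perm_on hU hsm (bigList_perm β i) xc hxc, dlist_append]
    rfl
  simp only [h1]
  have hF : ∀ i ∈ Finset.univ, SmOn U (coordDeriv n i (coordDeriv n i u)) :=
    fun i _ => (hsm.coordDeriv i).coordDeriv i
  rw [← dlist_sum_on hU hF (bigList β) xc hxc]
  have h2 : ∀ y ∈ U,
      (∑ i : Fin n, coordDeriv n i (coordDeriv n i u) y) = -((k:ℂ)^2) * u y := by
    intro y hy
    have h3 := hhelm y hy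
    rw [lap] at h3
    linear_combination h3
  rw [dlist_congr_on hU h2 (bigList β) xc hxc,
    dlist_const_mul_on hU hsm _ (bigList β) xc hxc,
    ← multiDeriv_eq_dlist, hvanish β hβ, mul_zero]

end Aux

theorem stmt0_taylor_poly_of_helmholtz_is_harmonic
    (n N : ℕ) (k : ℝ) (U : Set (Euc n)) (hU : IsOpen U) (u : Euc n → ℂ)
    (xc : Euc n) (hxc : xc ∈ U)
    (hsmooth : ContDiffOn ℝ (⊤ : ℕ∞) u U)
    (hhelm : ∀ x ∈ U, lap n u x + (k : ℂ) ^ 2 * u x = 0)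
    (hvanish : ∀ γ : Fin n → ℕ, (∑ i, γ i) < N → multiDeriv n γ u xc = 0) :
    ∀ x : Euc n, lap n (taylorHom n N u xc) x = 0 := by
  intro x
  have hT : taylorHom n N u xc = fun x => ∑ γ ∈ degSet n N,
      (multiDeriv n γ u xc / ((∏ i, Nat.factorial (γ i) : ℕ) : ℂ)) * mono n γ x := rfl
  rw [hT]
  refine (lap_sum_mono (degSet n N) (fun γ => γ)
    (fun γ => multiDeriv n γ u xc / ((∏ j, Nat.factorial (γ j) : ℕ) : ℂ)) x).trans ?_
  show (∑ i : Fin n, ∑ γ ∈ degSet n N,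
      (multiDeriv n γ u xc / ((∏ j, Nat.factorial (γ j) : ℕ) : ℂ) * (γ i : ℂ)
        * ((γ i - 1 : ℕ) : ℂ)) * mono n (Function.update γ i (γ i - 2)) x) = 0
  rcases le_or_gt N 1 with hN | hN
  · apply Finset.sum_eq_zero
    intro i _
    apply Finset.sum_eq_zero
    intro γ hγ
    have h1 : γ i ≤ 1 := by
      have hs := mem_degSet.mp hγ
      have h2 : γ i ≤ ∑ j, γ j :=
        Finset.single_le_sum (fun j _ => Nat.zero_le _) (Finset.mem_univ i)
      omega
    have : γ i = 0 ∨ γ i = 1 := by omega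
    rcases this with h | h <;> simp [h]
  · obtain ⟨M, rfl⟩ : ∃ M, N = M + 2 := ⟨N - 2, by omega⟩
    have hre : ∀ i : Fin n,
        ∑ γ ∈ degSet n (M + 2),
          (multiDeriv n γ u xc / ((∏ j, Nat.factorial (γ j) : ℕ) : ℂ) * (γ i : ℂ)
            * ((γ i - 1 : ℕ) : ℂ)) * mono n (Function.update γ i (γ i - 2)) x
        = ∑ β ∈ degSet n M,
          (multiDeriv n (Function.update β i (β i + 2)) u xc
            / ((∏ j, Nat.factorial (β j) : ℕ) : ℂ)) * mono n β x :=
      fun i => reindex_sum M (fun γ => multiDeriv n γ u xc) i x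
    calc ∑ i : Fin n, ∑ γ ∈ degSet n (M + 2),
          (multiDeriv n γ u xc / ((∏ j, Nat.factorial (γ j) : ℕ) : ℂ) * (γ i : ℂ)
            * ((γ i - 1 : ℕ) : ℂ)) * mono n (Function.update γ i (γ i - 2)) x
        = ∑ i : Fin n, ∑ β ∈ degSet n M,
          (multiDeriv n (Function.update β i (β i + 2)) u xc
            / ((∏ j, Nat.factorial (β j) : ℕ) : ℂ)) * mono n β x :=
          Finset.sum_congr rfl fun i _ => hre i
      _ = ∑ β ∈ degSet n M, ((∑ i : Fin n, multiDeriv n (Function.update β i (β i + 2)) u xc)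
            / ((∏ j, Nat.factorial (β j) : ℕ) : ℂ)) * mono n β x := by
          rw [Finset.sum_comm]
          apply Finset.sum_congr rfl
          intro β _
          rw [← Finset.sum_mul, ← Finset.sum_div]
      _ = 0 := by
          apply Finset.sum_eq_zero
          intro β hβ
          have hβ2 : (∑ j, β j) < M + 2 := by
            rw [mem_degSet.mp hβ]; omega
          rw [key_vanish hU hxc hsmooth hhelm hvanish β hβ2, zero_div, zero_mul]
end

section
/- Stability of the cone Laplace transform under perturbation of the frequency: let 𝔠 ⊂ ℝ^n be an open cone, δ₀ > 0, ζ ∈ ℂ^n with |Re ζ| = |Im ζ| = 1 and Re ζ · x ≤ −δ₀|x| for all x ∈ 𝔠, P a homogeneous polynomial of degree N, and ρ(τ) = τ Re ζ + i√(τ² + k²) Im ζ for τ, k > 0. Then |∫_𝔠 e^{ζ·x} P(x) dx − ∫_𝔠 e^{(ρ(τ)/τ)·x} P(x) dx| ≤ (N+n)! δ₀^{−N−n−1} (k/τ) ‖P‖, where ‖P‖ = ∫_{S^{n-1}} |P(θ)| dσ(θ). -/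
open MeasureTheory Metric Real
open scoped RealInnerProductSpace BigOperators

/-!
Both integrands are `e^{⟪a, x⟫} P x` times a unimodular phase, and with `β = √(τ² + k²) / τ` the
two phases differ by at most `|β - 1| |⟪b, x⟫| ≤ (k / τ) ‖x‖`. On the cone
`e^{⟪a, x⟫} ≤ e^{-δ‖x‖}`, so the difference of the integrals is bounded by the integral over all
of `ℝⁿ` of `(k / τ) ‖x‖ |P x| e^{-δ‖x‖}`. In polar coordinates, homogeneity of `P` splits this
into `‖P‖_{L¹(S^{n-1})}` times the Gamma integral `∫₀^∞ r^{N+n} e^{-δr} dr = (N+n)! / δ^{N+n+1}`.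
-/

open Set
open scoped ENNReal Nat

section Polar

variable {E : Type*} [NormedAddCommGroup E] [NormedSpace ℝ E] [FiniteDimensional ℝ E]
  [MeasurableSpace E] [BorelSpace E] [Nontrivial E] (μ : Measure E) [μ.IsAddHaarMeasure]

theorem lintegral_angular_mul_radial {F : E → ℝ≥0∞} (hF : Measurable F) {g : ℝ → ℝ≥0∞}
    (hg : Measurable g) :
    ∫⁻ x, F (‖x‖⁻¹ • x) * g ‖x‖ ∂μ =
      (∫⁻ θ : sphere (0 : E) 1, F θ ∂μ.toSphere) *
        ∫⁻ r in Ioi 0, ENNReal.ofReal (r ^ (Module.finrank ℝ E - 1)) * g r := by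
  calc ∫⁻ x, F (‖x‖⁻¹ • x) * g ‖x‖ ∂μ
      = ∫⁻ x : ({0}ᶜ : Set E), F (‖x.1‖⁻¹ • x.1) * g ‖x.1‖ ∂(μ.comap (↑)) := by
        rw [lintegral_subtype_comap (measurableSet_singleton 0).compl
          (fun x => F (‖x‖⁻¹ • x) * g ‖x‖), restrict_compl_singleton]
    _ = ∫⁻ p, F p.1 * g p.2
          ∂(μ.toSphere.prod (Measure.volumeIoiPow (Module.finrank ℝ E - 1))) := by
        rw [← (Measure.measurePreserving_homeomorphUnitSphereProd μ).lintegral_comp_emb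
          (Homeomorph.measurableEmbedding _)]
        simp only [homeomorphUnitSphereProd_apply_fst_coe, homeomorphUnitSphereProd_apply_snd_coe]
    _ = (∫⁻ θ, F θ ∂μ.toSphere) *
          ∫⁻ r, g r ∂(Measure.volumeIoiPow (Module.finrank ℝ E - 1)) :=
        lintegral_prod_mul (hF.comp measurable_subtype_coe).aemeasurable
          (hg.comp measurable_subtype_coe).aemeasurable
    _ = _ :=
        congrArg _ ((lintegral_withDensity_eq_lintegral_mul _ (by fun_prop)
          (hg.comp measurable_subtype_coe)).trans (lintegral_subtype_comap measurableSet_Ioi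
            (fun r => ENNReal.ofReal (r ^ (Module.finrank ℝ E - 1)) * g r)))

end Polar

theorem integral_pow_mul_exp_neg_mul_Ioi (M : ℕ) {δ : ℝ} (hδ : 0 < δ) :
    ∫ r in Ioi (0 : ℝ), r ^ M * Real.exp (-(δ * r)) = M ! / δ ^ (M + 1) := by
  have h := Real.integral_rpow_mul_exp_neg_mul_Ioi (a := M + 1) (by positivity) hδ
  rw [add_sub_cancel_right, Real.Gamma_nat_eq_factorial, ← Nat.cast_add_one, Real.rpow_natCast,
    one_div, inv_pow, inv_mul_eq_div] at h
  simpa only [Real.rpow_natCast] using h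

theorem lintegral_pow_mul_exp_neg_mul_Ioi (M : ℕ) {δ : ℝ} (hδ : 0 < δ) :
    ∫⁻ r in Ioi (0 : ℝ), ENNReal.ofReal (r ^ M * Real.exp (-(δ * r))) =
      ENNReal.ofReal (M ! / δ ^ (M + 1)) := by
  have h := integral_pow_mul_exp_neg_mul_Ioi M hδ
  rw [← h, ofReal_integral_eq_lintegral_ofReal
    (.of_integral_ne_zero (by rw [h]; positivity))]
  filter_upwards [ae_restrict_mem measurableSet_Ioi] with r (hr : 0 < r)
  positivity

theorem IsHomog.norm_apply_eq {n N : ℕ} {P : Euc n → ℂ} (hP : IsHomog n N P) {x : Euc n}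
    (hx : x ≠ 0) : ‖P x‖ = ‖x‖ ^ N * ‖P (‖x‖⁻¹ • x)‖ := by
  have hx' : 0 < ‖x‖ := norm_pos_iff.2 hx
  conv_lhs => rw [← smul_inv_smul₀ hx'.ne' x]
  rw [hP _ hx', norm_mul, norm_pow, Complex.norm_real, Real.norm_of_nonneg hx'.le]

theorem ofReal_normS {n : ℕ} {P : Euc n → ℂ} (hPc : Continuous P) :
    ENNReal.ofReal (normS n P) =
      ∫⁻ θ, ENNReal.ofReal ‖P θ‖ ∂(volume : Measure (Euc n)).toSphere := by
  unfold normS sphMeasure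
  exact ofReal_integral_eq_lintegral_ofReal
    ((hPc.comp continuous_subtype_val).norm.integrable_of_hasCompactSupport
      (HasCompactSupport.of_compactSpace _))
    (.of_forall fun _ => norm_nonneg _)

theorem normS_nonneg (n : ℕ) (P : Euc n → ℂ) : 0 ≤ normS n P :=
  integral_nonneg fun _ => norm_nonneg _

theorem lintegral_pow_norm_mul_norm_mul_exp_of_isHomog {n N : ℕ} (hn : 0 < n)
    {P : Euc n → ℂ} (hP : IsHomog n N P) (hPc : Continuous P) {δ : ℝ} (hδ : 0 < δ) (j : ℕ) :
    ∫⁻ x, ENNReal.ofReal (‖x‖ ^ j * ‖P x‖ * Real.exp (-(δ * ‖x‖))) =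
      ENNReal.ofReal (normS n P * ((N + j + n - 1) ! / δ ^ (N + j + n))) := by
  have : Nontrivial (Euc n) := Module.nontrivial_of_finrank_pos (R := ℝ) (by simpa using hn)
  have hpolar := lintegral_angular_mul_radial (volume : Measure (Euc n))
    (F := fun y => ENNReal.ofReal ‖P y‖) (by fun_prop)
    (g := fun r => ENNReal.ofReal (r ^ (N + j) * Real.exp (-(δ * r)))) (by fun_prop)
  calc _ = ∫⁻ x, ENNReal.ofReal ‖P (‖x‖⁻¹ • x)‖ *
          ENNReal.ofReal (‖x‖ ^ (N + j) * Real.exp (-(δ * ‖x‖))) := by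
        refine lintegral_congr_ae ((volume.ae_ne 0).mono fun x hx => ?_)
        dsimp only
        rw [← ENNReal.ofReal_mul (norm_nonneg _), hP.norm_apply_eq hx]
        ring_nf
    _ = ENNReal.ofReal (normS n P) *
          ∫⁻ r in Ioi 0, ENNReal.ofReal (r ^ (N + j + n - 1) * Real.exp (-(δ * r))) := by
        rw [hpolar, ← ofReal_normS hPc, finrank_euclideanSpace_fin]
        congr 1
        refine setLIntegral_congr_fun measurableSet_Ioi fun r (hr : 0 < r) => ?_
        rw [← ENNReal.ofReal_mul (by positivity), show N + j + n - 1 = n - 1 + (N + j) by omega]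
        ring_nf
    _ = _ := by
        rw [lintegral_pow_mul_exp_neg_mul_Ioi _ hδ, ← ENNReal.ofReal_mul (normS_nonneg n P),
          show N + j + n - 1 + 1 = N + j + n by omega]

theorem integrable_pow_norm_mul_norm_mul_exp_of_isHomog {n N : ℕ} (hn : 0 < n)
    {P : Euc n → ℂ} (hP : IsHomog n N P) (hPc : Continuous P) {δ : ℝ} (hδ : 0 < δ) (j : ℕ) :
    Integrable fun x : Euc n => ‖x‖ ^ j * ‖P x‖ * Real.exp (-(δ * ‖x‖)) := by
  refine ⟨by fun_prop, ?_⟩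
  rw [hasFiniteIntegral_iff_ofReal (.of_forall fun x => by positivity),
    lintegral_pow_norm_mul_norm_mul_exp_of_isHomog hn hP hPc hδ j]
  exact ENNReal.ofReal_lt_top

theorem integral_pow_norm_mul_norm_mul_exp_of_isHomog {n N : ℕ} (hn : 0 < n)
    {P : Euc n → ℂ} (hP : IsHomog n N P) (hPc : Continuous P) {δ : ℝ} (hδ : 0 < δ) (j : ℕ) :
    ∫ x, ‖x‖ ^ j * ‖P x‖ * Real.exp (-(δ * ‖x‖)) =
      normS n P * ((N + j + n - 1) ! / δ ^ (N + j + n)) := by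
  rw [integral_eq_lintegral_of_nonneg_ae (.of_forall fun x => by positivity) (by fun_prop),
    lintegral_pow_norm_mul_norm_mul_exp_of_isHomog hn hP hPc hδ j,
    ENNReal.toReal_ofReal (by have := normS_nonneg n P; positivity)]

theorem norm_cexp_add_I_mul_sub_le (s t u : ℝ) :
    ‖Complex.exp (s + Complex.I * t) - Complex.exp (s + Complex.I * u)‖ ≤
      Real.exp s * |t - u| := by
  have : Complex.exp (s + Complex.I * t) - Complex.exp (s + Complex.I * u) =
      Complex.exp (s + Complex.I * u) * (Complex.exp (Complex.I * ↑(t - u)) - 1) := by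
    rw [mul_sub, mul_one, ← Complex.exp_add]; push_cast; ring_nf
  rw [this, norm_mul, Complex.norm_exp]
  simpa using mul_le_mul_of_nonneg_left (Real.norm_exp_I_mul_ofReal_sub_one_le (x := t - u))
    (Real.exp_nonneg s)

theorem abs_sqrt_sq_add_sq_div_sub_one_le {τ k : ℝ} (hτ : 0 < τ) (hk : 0 ≤ k) :
    |√(τ ^ 2 + k ^ 2) / τ - 1| ≤ k / τ := by
  have hlow : τ ≤ √(τ ^ 2 + k ^ 2) := Real.le_sqrt_of_sq_le (by nlinarith)
  have hup : √(τ ^ 2 + k ^ 2) ≤ τ + k := Real.sqrt_le_iff.2 ⟨by linarith, by nlinarith⟩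
  rw [div_sub_one hτ.ne', abs_div, abs_of_pos hτ, abs_of_nonneg (by linarith)]
  gcongr
  linarith

section Laplace

variable {E : Type*} [NormedAddCommGroup E] [InnerProductSpace ℝ E]

theorem norm_cexp_inner_add_I_mul_le {a x : E} {δ : ℝ} (hax : ⟪a, x⟫ ≤ -δ * ‖x‖) (t : ℝ) :
    ‖Complex.exp (⟪a, x⟫ + Complex.I * t)‖ ≤ Real.exp (-(δ * ‖x‖)) := by
  rw [Complex.norm_exp]
  simpa [← neg_mul] using hax

theorem norm_cexp_inner_mul_sub_le {a b x : E} (hb : ‖b‖ ≤ 1) {δ : ℝ}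
    (hax : ⟪a, x⟫ ≤ -δ * ‖x‖) (β : ℝ) (p : ℂ) :
    ‖Complex.exp (⟪a, x⟫ + Complex.I * ⟪b, x⟫) * p -
        Complex.exp (⟪a, x⟫ + Complex.I * ↑(β * ⟪b, x⟫)) * p‖
      ≤ |β - 1| * (‖x‖ * ‖p‖ * Real.exp (-(δ * ‖x‖))) := by
  have hbx : |⟪b, x⟫| ≤ ‖x‖ :=
    (abs_real_inner_le_norm b x).trans (mul_le_of_le_one_left (norm_nonneg x) hb)
  rw [← sub_mul, norm_mul]
  calc _ ≤ Real.exp ⟪a, x⟫ * |⟪b, x⟫ - β * ⟪b, x⟫| * ‖p‖ := by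
        gcongr; exact norm_cexp_add_I_mul_sub_le _ _ _
    _ = |β - 1| * (|⟪b, x⟫| * ‖p‖ * Real.exp ⟪a, x⟫) := by
        rw [show ⟪b, x⟫ - β * ⟪b, x⟫ = -((β - 1) * ⟪b, x⟫) by ring, abs_neg, abs_mul]
        ring
    _ ≤ |β - 1| * (‖x‖ * ‖p‖ * Real.exp (-(δ * ‖x‖))) := by
        gcongr
        simpa [← neg_mul] using hax

variable [MeasurableSpace E] [OpensMeasurableSpace E]

theorem integrableOn_cexp_inner_add_I_mul_mul {μ : Measure E} {C : Set E} (hC : MeasurableSet C)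
    {a : E} {δ : ℝ} (haC : ∀ x ∈ C, ⟪a, x⟫ ≤ -δ * ‖x‖) {g : E → ℝ} (hgc : Continuous g)
    {P : E → ℂ} (hPc : Continuous P)
    (hw : Integrable (fun x => ‖P x‖ * Real.exp (-(δ * ‖x‖))) μ) :
    IntegrableOn (fun x => Complex.exp (⟪a, x⟫ + Complex.I * g x) * P x) C μ := by
  refine hw.integrableOn.mono' (by fun_prop : Continuous _).aestronglyMeasurable
    (ae_restrict_of_forall_mem hC fun x hx => ?_)
  rw [norm_mul, mul_comm]
  gcongr
  exact norm_cexp_inner_add_I_mul_le (haC x hx) _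

end Laplace

theorem stmt10_cone_laplace_stability_general
    (n N : ℕ) (hn : 2 ≤ n) (C : Set (Euc n)) (hC : IsOpenCone n C)
    (δ k τ : ℝ) (hδ : 0 < δ) (hk : 0 < k) (hτ : 0 < τ)
    (a b : Euc n) (hb : ‖b‖ = 1)
    (haC : ∀ x ∈ C, ⟪a, x⟫ ≤ -δ * ‖x‖)
    (P : Euc n → ℂ) (hP : IsHomog n N P) (hPc : Continuous P) :
    ‖(∫ x in C, Complex.exp ((⟪a, x⟫ : ℂ) + Complex.I * (⟪b, x⟫ : ℂ)) * P x) -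
        ∫ x in C, Complex.exp ((⟪a, x⟫ : ℂ) +
          Complex.I * (Real.sqrt (τ ^ 2 + k ^ 2) / τ : ℝ) * (⟪b, x⟫ : ℂ)) * P x‖ ≤
      (Nat.factorial (N + n) : ℝ) * δ ^ (-((N : ℤ) + n + 1)) * (k / τ) * normS n P := by
  have hn0 : 0 < n := by omega
  have hCm : MeasurableSet C := hC.1.measurableSet
  have hw := integrable_pow_norm_mul_norm_mul_exp_of_isHomog hn0 hP hPc hδ
  have hint : ∀ g : Euc n → ℝ, Continuous g →
      IntegrableOn (fun x => Complex.exp (⟪a, x⟫ + Complex.I * g x) * P x) C :=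
    fun g hgc => integrableOn_cexp_inner_add_I_mul_mul hCm haC hgc hPc (by simpa using hw 0)
  have hβ := abs_sqrt_sq_add_sq_div_sub_one_le hτ hk.le
  simp_rw [mul_assoc Complex.I, ← Complex.ofReal_mul]
  rw [← integral_sub (hint _ (by fun_prop)) (hint _ (by fun_prop))]
  calc _ ≤ ∫ x in C, k / τ * (‖x‖ ^ 1 * ‖P x‖ * Real.exp (-(δ * ‖x‖))) :=
        norm_integral_le_of_norm_le ((hw 1).const_mul _).integrableOn <|
          ae_restrict_of_forall_mem hCm fun x hx =>
            (norm_cexp_inner_mul_sub_le hb.le (haC x hx) _ _).trans (by rw [pow_one]; gcongr)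
    _ ≤ ∫ x, k / τ * (‖x‖ ^ 1 * ‖P x‖ * Real.exp (-(δ * ‖x‖))) :=
        setIntegral_le_integral ((hw 1).const_mul _) (.of_forall fun x => by positivity)
    _ = _ := by
        rw [integral_const_mul, integral_pow_norm_mul_norm_mul_exp_of_isHomog hn0 hP hPc hδ,
          show N + 1 + n - 1 = N + n by omega,
          show -((N : ℤ) + n + 1) = -((N + 1 + n : ℕ) : ℤ) by push_cast; ring, zpow_neg,
          zpow_natCast]
        ring

theorem stmt10_cone_laplace_stability
    (n N : ℕ) (hn : 2 ≤ n) (C : Set (Euc n)) (hC : IsOpenCone n C)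
    (δ k τ : ℝ) (hδ : 0 < δ) (hk : 0 < k) (hτ : 0 < τ)
    (a b : Euc n) (ha : ‖a‖ = 1) (hb : ‖b‖ = 1)
    (haC : ∀ x ∈ C, ⟪a, x⟫ ≤ -δ * ‖x‖)
    (P : Euc n → ℂ) (hP : IsHomog n N P) (hPc : Continuous P) :
    ‖(∫ x in C, Complex.exp ((⟪a, x⟫ : ℂ) + Complex.I * (⟪b, x⟫ : ℂ)) * P x) -
        ∫ x in C, Complex.exp ((⟪a, x⟫ : ℂ) +
          Complex.I * (Real.sqrt (τ ^ 2 + k ^ 2) / τ : ℝ) * (⟪b, x⟫ : ℂ)) * P x‖ ≤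
      (Nat.factorial (N + n) : ℝ) * δ ^ (-((N : ℤ) + n + 1)) * (k / τ) * normS n P :=
  stmt10_cone_laplace_stability_general n N hn C hC δ k τ hδ hk hτ a b hb haC P hP hPc
end
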